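/- For real numbers μ_F, μ_G and positive real numbers σ_F, σ_G, the Rényi divergence of order 1/2 between the Gaussian distributions F = N(μ_F, σ_F²) and G = N(μ_G, σ_G²) on ℝ equals the closed form I_{1/2}(F‖G) = (μ_F − μ_G)² / (2(σ_F² + σ_G²)) + ln((σ_F² + σ_G²)/(2 σ_F σ_G)), i.e., twice the Bhattacharyya distance (μ_F − μ_G)²/(4(σ_F² + σ_G²)) + (1/2) ln((σ_F² + σ_G²)/(2 σ_F σ_G)). -/

import Mathlib

open MeasureTheory ProbabilityTheory

/-- The Rényi divergence of order `q` between two measures `F` and `G`,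
`I_q(F‖G) = (1/(q−1)) ln ∫ f^q g^{1−q} dμ`, computed with densities (Radon–Nikodym
derivatives) of `F` and `G` with respect to the common dominating measure `F + G`.
(For `q ∈ (0,1)` the value of the Hellinger-type integral does not depend on the
choice of common dominating measure.) Divergences are in nats. -/
noncomputable def renyiDiv {α : Type*} [MeasurableSpace α] (q : ℝ) (F G : Measure α) : ℝ :=
  (q - 1)⁻¹ *
    Real.log (∫ x, ((F.rnDeriv (F + G) x).toReal) ^ q *
      ((G.rnDeriv (F + G) x).toReal) ^ (1 - q) ∂(F + G))

/-
For measures with densities `f` and `g` with respect to a common σ-finite measure `ν`, the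
Hellinger integral `∫ (dF/d(F+G))^q (dG/d(F+G))^(1-q) d(F+G)` equals `∫ f^q g^(1-q) dν`: the
Radon–Nikodym derivatives are `f/(f+g)` and `g/(f+g)`, and their powers of total degree one cancel
the density `f+g` of `F+G`. For Gaussians, completing the square in the exponent turns
`f^q g^(1-q)` into a multiple of an unnormalised Gaussian of variance
`σ_F²σ_G² / (qσ_G² + (1-q)σ_F²)`, so the integral, and with it the Rényi divergence of every
order `q ≠ 1` with `qσ_G² + (1-q)σ_F² > 0`, is explicit; `q = 1/2` gives the stated formula.
-/

open Real
open scoped ENNReal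

lemma mul_div_rpow_mul_div_rpow {a b s : ℝ} (ha : 0 ≤ a) (hb : 0 ≤ b) (hs : 0 < s) (q : ℝ) :
    s * ((a / s) ^ q * (b / s) ^ (1 - q)) = a ^ q * b ^ (1 - q) := by
  have hsq : s ^ q * s ^ (1 - q) = s := by
    rw [← rpow_add hs, add_sub_cancel, rpow_one]
  rw [div_rpow ha hs.le, div_rpow hb hs.le]
  calc s * (a ^ q / s ^ q * (b ^ (1 - q) / s ^ (1 - q)))
      = a ^ q * b ^ (1 - q) * (s / (s ^ q * s ^ (1 - q))) := by ring
    _ = a ^ q * b ^ (1 - q) := by rw [hsq, div_self hs.ne', mul_one]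

section Hellinger

variable {α : Type*} [MeasurableSpace α]

noncomputable def hellingerIntegral (q : ℝ) (F G : Measure α) : ℝ :=
  ∫ x, (F.rnDeriv (F + G) x).toReal ^ q * (G.rnDeriv (F + G) x).toReal ^ (1 - q) ∂(F + G)

lemma renyiDiv_eq_inv_mul_log_hellingerIntegral (q : ℝ) (F G : Measure α) :
    renyiDiv q F G = (q - 1)⁻¹ * log (hellingerIntegral q F G) := rfl

lemma hellingerIntegral_withDensity_ofReal {ν : Measure α} [SigmaFinite ν] {f g : α → ℝ}
    (hf : Measurable f) (hg : Measurable g) (hf₀ : ∀ x, 0 ≤ f x) (hg₀ : ∀ x, 0 ≤ g x)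
    (hfg : ∀ x, 0 < f x + g x) (q : ℝ) :
    hellingerIntegral q (ν.withDensity fun x ↦ ENNReal.ofReal (f x))
        (ν.withDensity fun x ↦ ENNReal.ofReal (g x))
      = ∫ x, f x ^ q * g x ^ (1 - q) ∂ν := by
  set F := ν.withDensity fun x ↦ ENNReal.ofReal (f x)
  set G := ν.withDensity fun x ↦ ENNReal.ofReal (g x)
  set p : α → ℝ≥0∞ := fun x ↦ ENNReal.ofReal (f x + g x)
  have hp : Measurable p := (hf.add hg).ennreal_ofReal
  have hFG : F + G = ν.withDensity p := by
    rw [← withDensity_add_left hf.ennreal_ofReal]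
    congr with x
    exact (ENNReal.ofReal_add (hf₀ x) (hg₀ x)).symm
  have hp_ne_zero : ∀ᵐ x ∂ν, p x ≠ 0 := ae_of_all _ fun x ↦ by simpa [p] using hfg x
  have hp_ne_top : ∀ᵐ x ∂ν, p x ≠ ∞ := ae_of_all _ fun x ↦ ENNReal.ofReal_ne_top
  have hdF : F.rnDeriv (F + G) =ᵐ[ν] fun x ↦ (p x)⁻¹ * ENNReal.ofReal (f x) := by
    rw [hFG]
    filter_upwards [Measure.rnDeriv_withDensity_right F ν hp.aemeasurable hp_ne_zero hp_ne_top,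
      Measure.rnDeriv_withDensity ν hf.ennreal_ofReal] with x h₁ h₂
    rw [h₁, h₂]
  have hdG : G.rnDeriv (F + G) =ᵐ[ν] fun x ↦ (p x)⁻¹ * ENNReal.ofReal (g x) := by
    rw [hFG]
    filter_upwards [Measure.rnDeriv_withDensity_right G ν hp.aemeasurable hp_ne_zero hp_ne_top,
      Measure.rnDeriv_withDensity ν hg.ennreal_ofReal] with x h₁ h₂
    rw [h₁, h₂]
  rw [hellingerIntegral, hFG,
    integral_withDensity_eq_integral_toReal_smul hp (ae_of_all _ fun _ ↦ ENNReal.ofReal_lt_top),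
    ← hFG]
  refine integral_congr_ae ?_
  filter_upwards [hdF, hdG] with x hFx hGx
  simp only [hFx, hGx, p, smul_eq_mul, ENNReal.toReal_mul, ENNReal.toReal_inv,
    ENNReal.toReal_ofReal (hf₀ x), ENNReal.toReal_ofReal (hg₀ x),
    ENNReal.toReal_ofReal (hfg x).le, ← div_eq_inv_mul]
  exact mul_div_rpow_mul_div_rpow (hf₀ x) (hg₀ x) (hfg x) q

end Hellinger

lemma mul_sq_div_add_one_sub_mul_sq_div {q a b s : ℝ} (ha : a ≠ 0) (hb : b ≠ 0)
    (hs : s = q * b + (1 - q) * a) (hs₀ : s ≠ 0) (x u v : ℝ) :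
    q * ((x - u) ^ 2 / (2 * a)) + (1 - q) * ((x - v) ^ 2 / (2 * b))
      = s / (2 * a * b) * (x - (q * b * u + (1 - q) * a * v) / s) ^ 2
        + q * (1 - q) * (u - v) ^ 2 / (2 * s) := by
  field_simp
  rw [hs]
  ring

section Gaussian

open scoped NNReal

variable {μF μG : ℝ} {vF vG : ℝ≥0} {q : ℝ}

lemma log_integral_gaussianPDFReal_rpow_mul_rpow (hvF : vF ≠ 0) (hvG : vG ≠ 0)
    (hs : 0 < q * vG + (1 - q) * vF) :
    log (∫ x, gaussianPDFReal μF vF x ^ q * gaussianPDFReal μG vG x ^ (1 - q))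
      = -(q * (1 - q) * (μF - μG) ^ 2 / (2 * (q * vG + (1 - q) * vF)))
        + ((1 - q) * log vF + q * log vG - log (q * vG + (1 - q) * vF)) / 2 := by
  set a : ℝ := (vF : ℝ)
  set b : ℝ := (vG : ℝ)
  set s := q * b + (1 - q) * a with hs_def
  have ha : 0 < a := by positivity
  have hb : 0 < b := by positivity
  set m := (q * b * μF + (1 - q) * a * μG) / s
  set D := q * (1 - q) * (μF - μG) ^ 2 / (2 * s)
  set k := s / (2 * a * b)
  set C := (√(2 * π * a))⁻¹ ^ q * (√(2 * π * b))⁻¹ ^ (1 - q)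
  have hpoint : ∀ x, gaussianPDFReal μF vF x ^ q * gaussianPDFReal μG vG x ^ (1 - q)
      = C * exp (-D) * exp (-k * (x - m) ^ 2) := by
    intro x
    rw [gaussianPDFReal, gaussianPDFReal, mul_rpow (by positivity) (exp_pos _).le,
      mul_rpow (by positivity) (exp_pos _).le, ← exp_mul, ← exp_mul]
    have hexp : exp (-(x - μF) ^ 2 / (2 * a) * q) * exp (-(x - μG) ^ 2 / (2 * b) * (1 - q))
        = exp (-D) * exp (-k * (x - m) ^ 2) := by
      rw [← exp_add, ← exp_add]
      congr 1
      linear_combination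
        (-1) * mul_sq_div_add_one_sub_mul_sq_div ha.ne' hb.ne' hs_def hs.ne' x μF μG
    rw [mul_mul_mul_comm, hexp, ← mul_assoc]
  have hI : ∫ x, gaussianPDFReal μF vF x ^ q * gaussianPDFReal μG vG x ^ (1 - q)
      = C * exp (-D) * √(π / k) := by
    simp_rw [hpoint]
    rw [integral_const_mul, integral_sub_right_eq_self (fun y ↦ exp (-k * y ^ 2)) m,
      integral_gaussian]
  have hlog_two_pi_mul : ∀ c : ℝ, 0 < c → log (2 * π * c) = log 2 + log π + log c := by
    intro c hc
    rw [log_mul (by positivity) hc.ne', log_mul two_ne_zero pi_ne_zero]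
  have hlogC : log C = -(q * log (2 * π * a) + (1 - q) * log (2 * π * b)) / 2 := by
    rw [log_mul (by positivity) (by positivity), log_rpow (by positivity),
      log_rpow (by positivity), log_inv, log_inv, log_sqrt (by positivity),
      log_sqrt (by positivity)]
    ring
  have hlogk : log k = log s - (log 2 + log a + log b) := by
    rw [log_div hs.ne' (by positivity), log_mul (by positivity) hb.ne',
      log_mul two_ne_zero ha.ne']
  rw [hI, log_mul (by positivity) (by positivity), log_mul (by positivity) (exp_pos _).ne',
    log_exp, hlogC, log_sqrt (by positivity), log_div pi_ne_zero (by positivity), hlogk,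
    hlog_two_pi_mul a ha, hlog_two_pi_mul b hb]
  ring

lemma renyiDiv_gaussianReal (μF μG : ℝ) (hvF : vF ≠ 0) (hvG : vG ≠ 0) (hq : q ≠ 1)
    (hs : 0 < q * vG + (1 - q) * vF) :
    renyiDiv q (gaussianReal μF vF) (gaussianReal μG vG)
      = q * (μF - μG) ^ 2 / (2 * (q * vG + (1 - q) * vF))
        + (log (q * vG + (1 - q) * vF) - (1 - q) * log vF - q * log vG)
          / (2 * (1 - q)) := by
  rw [renyiDiv_eq_inv_mul_log_hellingerIntegral, gaussianReal_of_var_ne_zero _ hvF,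
    gaussianReal_of_var_ne_zero _ hvG, gaussianPDF_def, gaussianPDF_def,
    hellingerIntegral_withDensity_ofReal (measurable_gaussianPDFReal _ _)
      (measurable_gaussianPDFReal _ _) (gaussianPDFReal_nonneg _ _) (gaussianPDFReal_nonneg _ _)
      (fun x ↦ add_pos (gaussianPDFReal_pos _ _ x hvF) (gaussianPDFReal_pos _ _ x hvG)),
    log_integral_gaussianPDFReal_rpow_mul_rpow hvF hvG hs]
  have h₁ : q - 1 ≠ 0 := sub_ne_zero.mpr hq
  have h₂ : 1 - q ≠ 0 := sub_ne_zero.mpr hq.symm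
  field_simp
  ring

end Gaussian

/-- The Rényi divergence of order 1/2 between Gaussian distributions
`F = N(μ_F, σ_F²)` and `G = N(μ_G, σ_G²)` equals
`(μ_F − μ_G)²/(2(σ_F² + σ_G²)) + ln((σ_F² + σ_G²)/(2 σ_F σ_G))`,
i.e. twice the Bhattacharyya distance. -/
theorem renyiDiv_half_gaussian (μF μG σF σG : ℝ) (hσF : 0 < σF) (hσG : 0 < σG) :
    renyiDiv (1 / 2) (gaussianReal μF (Real.toNNReal (σF ^ 2)))
        (gaussianReal μG (Real.toNNReal (σG ^ 2)))
      = (μF - μG) ^ 2 / (2 * (σF ^ 2 + σG ^ 2))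
        + Real.log ((σF ^ 2 + σG ^ 2) / (2 * σF * σG)) := by
  have hvF : (σF ^ 2).toNNReal ≠ 0 := by simpa using hσF.ne'
  have hvG : (σG ^ 2).toNNReal ≠ 0 := by simpa using hσG.ne'
  have hcoeF : ((σF ^ 2).toNNReal : ℝ) = σF ^ 2 := Real.coe_toNNReal _ (sq_nonneg _)
  have hcoeG : ((σG ^ 2).toNNReal : ℝ) = σG ^ 2 := Real.coe_toNNReal _ (sq_nonneg _)
  rw [renyiDiv_gaussianReal μF μG hvF hvG (by norm_num) (by rw [hcoeF, hcoeG]; positivity),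
    hcoeF, hcoeG, log_div (by positivity) (by positivity), log_mul (by positivity) hσG.ne',
    log_mul two_ne_zero hσF.ne', log_pow, log_pow,
    show (1 / 2 : ℝ) * σG ^ 2 + (1 - 1 / 2) * σF ^ 2 = (σF ^ 2 + σG ^ 2) / 2 by ring,
    log_div (by positivity) two_ne_zero]
  have hsum : σF ^ 2 + σG ^ 2 ≠ 0 := by positivity
  field_simp
  ring
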